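/- If U is an open packing of the subdivision graph S(G), then the set of vertices of G corresponding to the original vertices in U is an independent set in G, and the set of edges of G corresponding to the subdivision vertices in U is a matching in G; hence ρ°(S(G)) ≤ α(G) + α'(G). -/
import Mathlib


variable {V : Type*}

/-- A set of vertices is an open packing if the open neighborhoods of distinct
vertices in it are pairwise disjoint. -/
def IsOpenPacking (G : SimpleGraph V) (S : Set V) : Prop :=
  S.Pairwise fun u v => Disjoint (G.neighborSet u) (G.neighborSet v)

/-- The open packing number: the maximum cardinality of an open packing. -/
noncomputable def openPackingNumber (G : SimpleGraph V) : ℕ :=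
  sSup {n | ∃ S : Finset V, IsOpenPacking G ↑S ∧ S.card = n}

/-- `U` is the unique maximum open packing of `G`. -/
def HasUniqueMaxOpenPacking (G : SimpleGraph V) (U : Finset V) : Prop :=
  IsOpenPacking G ↑U ∧ U.card = openPackingNumber G ∧
    ∀ S : Finset V, IsOpenPacking G ↑S → S.card = openPackingNumber G → S = U

/-- A set of vertices is independent if no two of its vertices are adjacent. -/
def IsIndepVSet (G : SimpleGraph V) (S : Set V) : Prop :=
  S.Pairwise fun u v => ¬ G.Adj u v

/-- The independence number of a graph. -/
noncomputable def indepNumber (G : SimpleGraph V) : ℕ :=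
  sSup {n | ∃ S : Finset V, IsIndepVSet G ↑S ∧ S.card = n}

/-- A set of edges is a matching if the edges are pairwise disjoint. -/
def IsMatchingSet (G : SimpleGraph V) (M : Set (Sym2 V)) : Prop :=
  M ⊆ G.edgeSet ∧ M.Pairwise fun e f => ∀ v : V, v ∈ e → v ∉ f

/-- The matching number of a graph. -/
noncomputable def matchingNumber (G : SimpleGraph V) : ℕ :=
  sSup {n | ∃ M : Finset (Sym2 V), IsMatchingSet G ↑M ∧ M.card = n}

/-- The subdivision of `G`: each edge `e = uv` is replaced by a new vertex
`Sum.inr e` adjacent exactly to `u` and `v`. -/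
def subdivisionGraph (G : SimpleGraph V) : SimpleGraph (V ⊕ G.edgeSet) :=
  SimpleGraph.fromRel fun a b => match a, b with
    | Sum.inl u, Sum.inr e => u ∈ (e : Sym2 V)
    | _, _ => False

theorem stmt_12 [Fintype V] [DecidableEq V] (G : SimpleGraph V) [DecidableRel G.Adj] :
    (∀ U : Set (V ⊕ G.edgeSet), IsOpenPacking (subdivisionGraph G) U →
      IsIndepVSet G {v : V | Sum.inl v ∈ U} ∧
      IsMatchingSet G {e : Sym2 V | ∃ h : e ∈ G.edgeSet, Sum.inr ⟨e, h⟩ ∈ U}) ∧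
    openPackingNumber (subdivisionGraph G) ≤ indepNumber G + matchingNumber G := by

  have key : ∀ U : Set (V ⊕ G.edgeSet), IsOpenPacking (subdivisionGraph G) U →
      IsIndepVSet G {v : V | Sum.inl v ∈ U} ∧
      IsMatchingSet G {e : Sym2 V | ∃ h : e ∈ G.edgeSet, Sum.inr ⟨e, h⟩ ∈ U} := by
    intro U hU
    constructor
    · intro u hu v hv huv hadj
      have hne : (Sum.inl u : V ⊕ G.edgeSet) ≠ Sum.inl v := by simp [huv]
      have hd := hU hu hv hne
      have h1 : (Sum.inr ⟨s(u,v), hadj⟩ : V ⊕ G.edgeSet) ∈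
          (subdivisionGraph G).neighborSet (Sum.inl u) := by
        simp [subdivisionGraph, SimpleGraph.neighborSet, SimpleGraph.fromRel_adj]
      have h2 : (Sum.inr ⟨s(u,v), hadj⟩ : V ⊕ G.edgeSet) ∈
          (subdivisionGraph G).neighborSet (Sum.inl v) := by
        simp [subdivisionGraph, SimpleGraph.neighborSet, SimpleGraph.fromRel_adj]
      exact Set.disjoint_left.mp hd h1 h2
    · constructor
      · rintro e ⟨h, -⟩; exact h
      · rintro e ⟨he, hUe⟩ f ⟨hf, hUf⟩ hef v hve hvf
        have hne : (Sum.inr ⟨e, he⟩ : V ⊕ G.edgeSet) ≠ Sum.inr ⟨f, hf⟩ := by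
          simp [hef]
        have hd := hU hUe hUf hne
        have h1 : (Sum.inl v : V ⊕ G.edgeSet) ∈
            (subdivisionGraph G).neighborSet (Sum.inr ⟨e, he⟩) := by
          simp [subdivisionGraph, SimpleGraph.neighborSet, SimpleGraph.fromRel_adj, hve]
        have h2 : (Sum.inl v : V ⊕ G.edgeSet) ∈
            (subdivisionGraph G).neighborSet (Sum.inr ⟨f, hf⟩) := by
          simp [subdivisionGraph, SimpleGraph.neighborSet, SimpleGraph.fromRel_adj, hvf]
        exact Set.disjoint_left.mp hd h1 h2
  refine ⟨key, ?_⟩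
  have hbddI : BddAbove {n | ∃ S : Finset V, IsIndepVSet G ↑S ∧ S.card = n} :=
    ⟨Fintype.card V, by rintro n ⟨S, -, rfl⟩; simpa using S.card_le_univ⟩
  have hbddM : BddAbove {n | ∃ M : Finset (Sym2 V), IsMatchingSet G ↑M ∧ M.card = n} :=
    ⟨Fintype.card (Sym2 V), by rintro n ⟨S, -, rfl⟩; simpa using S.card_le_univ⟩
  have hne : {n | ∃ S : Finset (V ⊕ G.edgeSet),
      IsOpenPacking (subdivisionGraph G) ↑S ∧ S.card = n}.Nonempty :=
    ⟨0, ∅, by simp [IsOpenPacking], by simp⟩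
  apply csSup_le hne
  rintro n ⟨S, hS, rfl⟩
  obtain ⟨hind, hmat⟩ := key ↑S hS
  set A := S.toLeft with hA
  set B := S.toRight.image Subtype.val with hB
  have hcoeA : {v : V | Sum.inl v ∈ (↑S : Set (V ⊕ G.edgeSet))} = ↑A := by
    ext v; simp [hA]
  have hcoeB : {e : Sym2 V | ∃ h : e ∈ G.edgeSet,
      Sum.inr ⟨e, h⟩ ∈ (↑S : Set (V ⊕ G.edgeSet))} = ↑B := by
    ext e
    simp only [hB, Finset.coe_image, Set.mem_image, Finset.mem_coe,
      Finset.mem_toRight, Set.mem_setOf_eq]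
    constructor
    · rintro ⟨h, hmem⟩; exact ⟨⟨e, h⟩, hmem, rfl⟩
    · rintro ⟨⟨x, hx⟩, hmem, rfl⟩; exact ⟨hx, hmem⟩
  have h1 : A.card ≤ indepNumber G := by
    apply le_csSup hbddI
    exact ⟨A, hcoeA ▸ hind, rfl⟩
  have h2 : B.card ≤ matchingNumber G := by
    apply le_csSup hbddM
    exact ⟨B, hcoeB ▸ hmat, rfl⟩
  have hcard : S.card = A.card + B.card := by
    rw [hB, Finset.card_image_of_injective _ Subtype.val_injective,
      Finset.card_toLeft_add_card_toRight]
  rw [hcard]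
  exact Nat.add_le_add h1 h2
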